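/- Let μ = p₁ δ_{r₁} + p₂ δ_{r₂} + p₃ δ_{r₃} be a three-point probability measure on the unit sphere S² of ℝ³ (r₁, r₂, r₃ unit vectors, p₁, p₂, p₃ ≥ 0, p₁ + p₂ + p₃ = 1). Then g*(μ) ≥ 1/√3, and equality holds if and only if r₁, r₂, r₃ are mutually orthogonal and p₁ = p₂ = p₃ = 1/3. -/

import Mathlib

open MeasureTheory Real
open scoped ENNReal

noncomputable section

abbrev E3 := EuclideanSpace ℝ (Fin 3)

/-- The unit sphere S² in ℝ³. -/
def unitSphere : Set E3 := Metric.sphere (0 : E3) 1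

/-- `g C μ` is the supremum over unit vectors `v` of `∫ √(C² + (1−C²)⟨r,v⟩²) dμ(r)`. -/
def g (C : ℝ) (μ : Measure E3) : ℝ :=
  ⨆ v : unitSphere, ∫ r, Real.sqrt (C ^ 2 + (1 - C ^ 2) * (inner ℝ r (v : E3) : ℝ) ^ 2) ∂μ


/-- `gstar μ` is the supremum over unit vectors `v` of `∫ |⟨r,v⟩| dμ(r)`. -/
def gstar (μ : Measure E3) : ℝ :=
  ⨆ v : unitSphere, ∫ r, |(inner ℝ r (v : E3) : ℝ)| ∂μ

/-! For an atomic measure `∑ pᵢ δ_{rᵢ}`, the supremum of `v ↦ ∑ pᵢ |⟨rᵢ, v⟩|` over the unit sphere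
equals the maximum of `‖∑ εᵢ pᵢ rᵢ‖` over sign vectors `ε`: taking `εᵢ = sign ⟨rᵢ, v⟩` turns the
sum into `⟨∑ εᵢ pᵢ rᵢ, v⟩`, and `v` parallel to `∑ εᵢ pᵢ rᵢ` realises its norm. Choosing the signs
one at a time so that each new cross term is nonnegative gives `‖∑ εᵢ pᵢ rᵢ‖² ≥ ∑ pᵢ² ≥ 1/n`.
If the maximum is `1/√3`, then `‖∑ εᵢ pᵢ rᵢ‖² ≤ 1/3` for every sign pattern; averaging over the
patterns kills the cross terms, so `∑ pᵢ² ≤ 1/3` and the weights are uniform, after which every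
cross term must vanish. Conversely, for orthonormal `rᵢ` and uniform weights each
`‖∑ εᵢ rᵢ / 3‖²` is at most `1/3`. -/

open scoped InnerProductSpace

lemma integral_sum_smul_dirac {α ι : Type*} [MeasurableSpace α] [MeasurableSingletonClass α]
    [Fintype ι] (f : α → ℝ) {p : ι → ℝ} (hp : ∀ i, 0 ≤ p i) (r : ι → α) :
    ∫ x, f x ∂(∑ i, ENNReal.ofReal (p i) • Measure.dirac (r i)) = ∑ i, p i * f (r i) := by
  rw [integral_finsetSum_measure fun i _ ↦
    (integrable_dirac enorm_lt_top).smul_measure ENNReal.ofReal_ne_top]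
  simp [integral_smul_measure, ENNReal.toReal_ofReal (hp _)]

section SignedSum

variable {E ι : Type*} [NormedAddCommGroup E] [InnerProductSpace ℝ E] [Fintype ι]

def signedSum (p : ι → ℝ) (r : ι → E) (ε : ι → SignType) : E :=
  ∑ i, ((ε i : ℝ) * p i) • r i

lemma inner_signedSum (p : ι → ℝ) (r : ι → E) (ε : ι → SignType) (v : E) :
    ⟪signedSum p r ε, v⟫_ℝ = ∑ i, (ε i : ℝ) * p i * ⟪r i, v⟫_ℝ := by
  simp [signedSum, sum_inner, real_inner_smul_left]

lemma sum_mul_abs_inner_eq_inner_signedSum_sign (p : ι → ℝ) (r : ι → E) (v : E) :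
    ∑ i, p i * |⟪r i, v⟫_ℝ| = ⟪signedSum p r (fun i ↦ SignType.sign ⟪r i, v⟫_ℝ), v⟫_ℝ := by
  rw [inner_signedSum]
  refine Finset.sum_congr rfl fun i _ ↦ ?_
  rw [← sign_mul_self]
  ring

lemma inner_signedSum_le_sum_mul_abs_inner {p : ι → ℝ} (hp : ∀ i, 0 ≤ p i) (r : ι → E)
    (ε : ι → SignType) (v : E) :
    ⟪signedSum p r ε, v⟫_ℝ ≤ ∑ i, p i * |⟪r i, v⟫_ℝ| := by
  rw [inner_signedSum]
  refine Finset.sum_le_sum fun i _ ↦ ?_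
  have hε : |(ε i : ℝ)| ≤ 1 := by rcases ε i with _ | _ | _ <;> simp
  calc (ε i : ℝ) * p i * ⟪r i, v⟫_ℝ ≤ |(ε i : ℝ) * p i * ⟪r i, v⟫_ℝ| := le_abs_self _
    _ = |(ε i : ℝ)| * (p i * |⟪r i, v⟫_ℝ|) := by rw [abs_mul, abs_mul, abs_of_nonneg (hp i)]; ring
    _ ≤ p i * |⟪r i, v⟫_ℝ| := mul_le_of_le_one_left (mul_nonneg (hp i) (abs_nonneg _)) hε

lemma sum_mul_abs_inner_le_iSup_norm_signedSum (p : ι → ℝ) (r : ι → E) {v : E} (hv : ‖v‖ = 1) :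
    ∑ i, p i * |⟪r i, v⟫_ℝ| ≤ ⨆ ε, ‖signedSum p r ε‖ := by
  rw [sum_mul_abs_inner_eq_inner_signedSum_sign]
  calc _ ≤ ‖signedSum p r (fun i ↦ SignType.sign ⟪r i, v⟫_ℝ)‖ := by
        simpa [hv] using real_inner_le_norm _ v
    _ ≤ _ := le_ciSup (f := fun ε ↦ ‖signedSum p r ε‖) (Finite.bddAbove_range _) _

theorem iSup_sphere_sum_mul_abs_inner_eq {p : ι → ℝ} (hp : ∀ i, 0 ≤ p i) (r : ι → E) :
    ⨆ v : Metric.sphere (0 : E) 1, ∑ i, p i * |⟪r i, v⟫_ℝ| = ⨆ ε, ‖signedSum p r ε‖ := by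
  have hle (v : Metric.sphere (0 : E) 1) := sum_mul_abs_inner_le_iSup_norm_signedSum p r
    (mem_sphere_zero_iff_norm.mp v.2)
  refine le_antisymm (Real.iSup_le hle (Real.iSup_nonneg fun _ ↦ norm_nonneg _)) ?_
  refine ciSup_le fun ε ↦ ?_
  set u := signedSum p r ε
  rcases eq_or_ne u 0 with hu | hu
  · rw [hu, norm_zero]
    exact Real.iSup_nonneg fun v ↦ Finset.sum_nonneg fun i _ ↦ by have := hp i; positivity
  · have hv : ‖‖u‖⁻¹ • u‖ = 1 := norm_smul_inv_norm hu
    calc ‖u‖ = ⟪u, ‖u‖⁻¹ • u⟫_ℝ := by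
          rw [real_inner_smul_right, real_inner_self_eq_norm_sq]
          field_simp
      _ ≤ _ := inner_signedSum_le_sum_mul_abs_inner hp r ε _
      _ ≤ _ := le_ciSup (f := fun v : Metric.sphere (0 : E) 1 ↦ ∑ i, p i * |⟪r i, v⟫_ℝ|)
            ⟨_, Set.forall_mem_range.2 hle⟩ ⟨_, mem_sphere_zero_iff_norm.mpr hv⟩

lemma exists_sign_norm_sq_add_le (u w : E) :
    ∃ σ : SignType, ‖u‖ ^ 2 + ‖w‖ ^ 2 ≤ ‖u + (σ : ℝ) • w‖ ^ 2 := by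
  rcases le_total 0 ⟪u, w⟫_ℝ with h | h
  · exact ⟨1, by rw [SignType.coe_one, one_smul, norm_add_sq_real]; linarith⟩
  · exact ⟨-1, by
      rw [SignType.coe_neg, SignType.coe_one, neg_one_smul, ← sub_eq_add_neg, norm_sub_sq_real]
      linarith⟩

lemma exists_sum_norm_sq_le_norm_sq_sum_sign_smul (w : ι → E) :
    ∃ ε : ι → SignType, ∑ i, ‖w i‖ ^ 2 ≤ ‖∑ i, (ε i : ℝ) • w i‖ ^ 2 := by
  classical
  suffices ∀ s : Finset ι, ∃ ε : ι → SignType,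
      ∑ i ∈ s, ‖w i‖ ^ 2 ≤ ‖∑ i ∈ s, (ε i : ℝ) • w i‖ ^ 2 from this Finset.univ
  intro s
  induction s using Finset.induction_on with
  | empty => exact ⟨1, by simp⟩
  | insert a s ha ih =>
    obtain ⟨ε, hε⟩ := ih
    obtain ⟨σ, hσ⟩ := exists_sign_norm_sq_add_le (∑ i ∈ s, (ε i : ℝ) • w i) (w a)
    refine ⟨Function.update ε a σ, ?_⟩
    have hs : ∑ i ∈ s, (Function.update ε a σ i : ℝ) • w i = ∑ i ∈ s, (ε i : ℝ) • w i :=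
      Finset.sum_congr rfl fun i hi ↦ by rw [Function.update_of_ne (ne_of_mem_of_not_mem hi ha)]
    rw [Finset.sum_insert ha, Finset.sum_insert ha, Function.update_self, hs, add_comm (_ • _)]
    linarith

theorem one_div_sqrt_card_le_iSup_norm_signedSum {p : ι → ℝ} (hp : ∑ i, p i = 1) {r : ι → E}
    (hr : ∀ i, ‖r i‖ = 1) :
    1 / √(Fintype.card ι) ≤ ⨆ ε, ‖signedSum p r ε‖ := by
  obtain ⟨ε, hε⟩ := exists_sum_norm_sq_le_norm_sq_sum_sign_smul fun i ↦ p i • r i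
  have hcard : 1 ≤ Fintype.card ι * ∑ i, p i ^ 2 := by
    simpa [hp] using sq_sum_le_card_mul_sum_sq (s := Finset.univ) (f := p)
  have hsq : (1 / √(Fintype.card ι)) ^ 2 ≤ ‖signedSum p r ε‖ ^ 2 := by
    simp only [signedSum, mul_smul, norm_smul, hr, mul_one, Real.norm_eq_abs, sq_abs] at hε ⊢
    rw [div_pow, one_pow, Real.sq_sqrt (Nat.cast_nonneg _)]
    exact (div_le_of_le_mul₀ (Nat.cast_nonneg _) (by positivity) (by rwa [mul_comm])).trans hε
  calc 1 / √(Fintype.card ι) ≤ ‖signedSum p r ε‖ :=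
        (pow_le_pow_iff_left₀ (by positivity) (norm_nonneg _) two_ne_zero).1 hsq
    _ ≤ _ := le_ciSup (f := fun ε ↦ ‖signedSum p r ε‖) (Finite.bddAbove_range _) _

end SignedSum

section FinThree

variable {E : Type*} [NormedAddCommGroup E] [InnerProductSpace ℝ E]

lemma norm_sq_sum_fin_three (c : Fin 3 → ℝ) {r : Fin 3 → E} (hr : ∀ i, ‖r i‖ = 1) :
    ‖∑ i, c i • r i‖ ^ 2 = c 0 ^ 2 + c 1 ^ 2 + c 2 ^ 2
      + 2 * (c 0 * c 1 * ⟪r 0, r 1⟫_ℝ + c 0 * c 2 * ⟪r 0, r 2⟫_ℝ + c 1 * c 2 * ⟪r 1, r 2⟫_ℝ) := by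
  rw [Fin.sum_univ_three, norm_add_sq_real, norm_add_sq_real, inner_add_left]
  simp only [norm_smul, real_inner_smul_left, real_inner_smul_right, hr, Real.norm_eq_abs,
    mul_pow, sq_abs]
  ring

theorem inner_eq_zero_and_eq_one_third_of_norm_sq_signedSum_le {p : Fin 3 → ℝ}
    (hp : ∑ i, p i = 1) {r : Fin 3 → E} (hr : ∀ i, ‖r i‖ = 1)
    (h : ∀ ε, ‖signedSum p r ε‖ ^ 2 ≤ 1 / 3) :
    ⟪r 0, r 1⟫_ℝ = 0 ∧ ⟪r 0, r 2⟫_ℝ = 0 ∧ ⟪r 1, r 2⟫_ℝ = 0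
      ∧ p 0 = 1 / 3 ∧ p 1 = 1 / 3 ∧ p 2 = 1 / 3 := by
  have key (s t : SignType) := h ![1, s, t]
  simp only [signedSum, norm_sq_sum_fin_three _ hr] at key
  have h₁ := key 1 1
  have h₂ := key 1 (-1)
  have h₃ := key (-1) 1
  have h₄ := key (-1) (-1)
  simp only [Matrix.cons_val_zero, Matrix.cons_val_one, Matrix.cons_val, SignType.coe_one,
    SignType.coe_neg, one_mul, neg_mul, mul_neg, neg_neg, even_two, Even.neg_pow] at h₁ h₂ h₃ h₄
  rw [Fin.sum_univ_three] at hp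
  -- adding the four inequalities cancels the cross terms
  have hsq : p 0 ^ 2 + p 1 ^ 2 + p 2 ^ 2 ≤ 1 / 3 := by linarith
  have hp₀ : p 0 = 1 / 3 := by nlinarith [sq_nonneg (p 1 - p 2), sq_nonneg (p 0 + p 1 + p 2 - 1)]
  have hp₁ : p 1 = 1 / 3 := by nlinarith [sq_nonneg (p 1 - p 2)]
  have hp₂ : p 2 = 1 / 3 := by linarith
  rw [hp₀, hp₁, hp₂] at h₁ h₂ h₃ h₄
  exact ⟨by linarith, by linarith, by linarith, hp₀, hp₁, hp₂⟩

theorem norm_sq_signedSum_le_of_orthogonal {p : Fin 3 → ℝ} (hp : ∀ i, p i = 1 / 3)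
    {r : Fin 3 → E} (hr : ∀ i, ‖r i‖ = 1) (h₀₁ : ⟪r 0, r 1⟫_ℝ = 0) (h₀₂ : ⟪r 0, r 2⟫_ℝ = 0)
    (h₁₂ : ⟪r 1, r 2⟫_ℝ = 0) (ε : Fin 3 → SignType) :
    ‖signedSum p r ε‖ ^ 2 ≤ 1 / 3 := by
  have hε (i) : (ε i : ℝ) ^ 2 ≤ 1 := by rcases ε i with _ | _ | _ <;> norm_num
  simp only [signedSum, norm_sq_sum_fin_three _ hr, h₀₁, h₀₂, h₁₂, hp, mul_pow]
  linarith [hε 0, hε 1, hε 2]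

end FinThree

lemma gstar_sum_smul_dirac {ι : Type*} [Fintype ι] {p : ι → ℝ} (hp : ∀ i, 0 ≤ p i) (r : ι → E3) :
    gstar (∑ i, ENNReal.ofReal (p i) • Measure.dirac (r i)) = ⨆ ε, ‖signedSum p r ε‖ := by
  simp only [gstar, integral_sum_smul_dirac _ hp]
  exact iSup_sphere_sum_mul_abs_inner_eq hp r

theorem gstar_three_settings_optimal (r₁ r₂ r₃ : E3)
    (h₁ : ‖r₁‖ = 1) (h₂ : ‖r₂‖ = 1) (h₃ : ‖r₃‖ = 1)
    (p₁ p₂ p₃ : ℝ) (hp₁ : 0 ≤ p₁) (hp₂ : 0 ≤ p₂) (hp₃ : 0 ≤ p₃) (hp : p₁ + p₂ + p₃ = 1) :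
    1 / Real.sqrt 3
      ≤ gstar (ENNReal.ofReal p₁ • Measure.dirac r₁ + ENNReal.ofReal p₂ • Measure.dirac r₂
          + ENNReal.ofReal p₃ • Measure.dirac r₃) ∧
    (gstar (ENNReal.ofReal p₁ • Measure.dirac r₁ + ENNReal.ofReal p₂ • Measure.dirac r₂
          + ENNReal.ofReal p₃ • Measure.dirac r₃) = 1 / Real.sqrt 3
      ↔ (inner ℝ r₁ r₂ : ℝ) = 0 ∧ (inner ℝ r₁ r₃ : ℝ) = 0 ∧ (inner ℝ r₂ r₃ : ℝ) = 0
          ∧ p₁ = 1 / 3 ∧ p₂ = 1 / 3 ∧ p₃ = 1 / 3) := by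
  set p : Fin 3 → ℝ := ![p₁, p₂, p₃]
  set r : Fin 3 → E3 := ![r₁, r₂, r₃]
  have hμ : ENNReal.ofReal p₁ • Measure.dirac r₁ + ENNReal.ofReal p₂ • Measure.dirac r₂
      + ENNReal.ofReal p₃ • Measure.dirac r₃ = ∑ i, ENNReal.ofReal (p i) • Measure.dirac (r i) := by
    simp [Fin.sum_univ_three, p, r]
  have hp_nonneg : ∀ i, 0 ≤ p i := by simp [Fin.forall_fin_succ, p, hp₁, hp₂, hp₃]
  have hr : ∀ i, ‖r i‖ = 1 := by simp [Fin.forall_fin_succ, r, h₁, h₂, h₃]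
  have hp_sum : ∑ i, p i = 1 := by simp [Fin.sum_univ_three, p, hp]
  have hlower : 1 / √3 ≤ ⨆ ε, ‖signedSum p r ε‖ := by
    simpa using one_div_sqrt_card_le_iSup_norm_signedSum hp_sum hr
  have hupper_iff : (⨆ ε, ‖signedSum p r ε‖) ≤ 1 / √3 ↔ ∀ ε, ‖signedSum p r ε‖ ^ 2 ≤ 1 / 3 := by
    have h3 : (1 / √3) ^ 2 = 1 / 3 := by rw [div_pow, one_pow, Real.sq_sqrt (by norm_num)]
    rw [ciSup_le_iff (Finite.bddAbove_range _)]
    refine forall_congr' fun ε ↦ ?_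
    rw [← h3, pow_le_pow_iff_left₀ (norm_nonneg _) (by positivity) two_ne_zero]
  rw [hμ, gstar_sum_smul_dirac hp_nonneg]
  refine ⟨hlower, fun heq ↦ ?_, fun ⟨h₀₁, h₀₂, h₁₂, hu₁, hu₂, hu₃⟩ ↦ ?_⟩
  · exact inner_eq_zero_and_eq_one_third_of_norm_sq_signedSum_le hp_sum hr (hupper_iff.1 heq.le)
  · have hp_eq : ∀ i, p i = 1 / 3 := by simp [Fin.forall_fin_succ, p, hu₁, hu₂, hu₃]
    exact le_antisymm (hupper_iff.2 (norm_sq_signedSum_le_of_orthogonal hp_eq hr h₀₁ h₀₂ h₁₂))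
      hlower
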